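/- arXiv:1404.5566 — 6 statements merged into one kernel-verified Lean document; each statement's English description precedes it below -/
import Mathlib

section
/- Let P be a finite set of points in ℝ² whose points have pairwise distinct x-coordinates and pairwise distinct y-coordinates, and let G_P be the graph on vertex set P in which two distinct points are adjacent if and only if they are x-consecutive or y-consecutive in P. Then a subset H ⊆ P is a hitting set for all axis-parallel slabs induced by pairs of distinct points of P (i.e., every such slab contains a point of H) if and only if H is a vertex cover of G_P. -/
/-- Membership of a point `r` in the vertical axis-parallel slab induced by `p` and `q`,
i.e. `[min p₁ q₁, max p₁ q₁] × ℝ`. -/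
def InVSlab (p q r : ℝ × ℝ) : Prop :=
  min p.1 q.1 ≤ r.1 ∧ r.1 ≤ max p.1 q.1

/-- Membership of a point `r` in the horizontal axis-parallel slab induced by `p` and `q`,
i.e. `ℝ × [min p₂ q₂, max p₂ q₂]`. -/
def InHSlab (p q r : ℝ × ℝ) : Prop :=
  min p.2 q.2 ≤ r.2 ∧ r.2 ≤ max p.2 q.2

/-- `p` and `q` are x-consecutive in `P`. -/
def XConsecutive (P : Finset (ℝ × ℝ)) (p q : ℝ × ℝ) : Prop :=
  ∀ r ∈ P, ¬ (min p.1 q.1 < r.1 ∧ r.1 < max p.1 q.1)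

/-- `p` and `q` are y-consecutive in `P`. -/
def YConsecutive (P : Finset (ℝ × ℝ)) (p q : ℝ × ℝ) : Prop :=
  ∀ r ∈ P, ¬ (min p.2 q.2 < r.2 ∧ r.2 < max p.2 q.2)

/-- The graph `G_P` on the point set `P`: two distinct points of `P` are adjacent iff
they are x-consecutive or y-consecutive in `P`. -/
def slabGraph (P : Finset (ℝ × ℝ)) : SimpleGraph (ℝ × ℝ) where
  Adj p q := p ≠ q ∧ p ∈ P ∧ q ∈ P ∧ (XConsecutive P p q ∨ YConsecutive P p q)
  symm := by
    constructor
    rintro p q ⟨hne, hp, hq, h⟩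
    refine ⟨hne.symm, hq, hp, ?_⟩
    rcases h with h | h
    · left
      intro r hr
      rw [min_comm q.1 p.1, max_comm q.1 p.1]
      exact h r hr
    · right
      intro r hr
      rw [min_comm q.2 p.2, max_comm q.2 p.2]
      exact h r hr
  loopless := by
    constructor
    rintro p ⟨hne, -⟩
    exact hne rfl


/-
Both directions work one coordinate at a time. A vertex cover hits every slab: between any two
points of `P` there is a consecutive pair of points of `P`, one endpoint of which lies in `H`.
Conversely, a slab induced by a consecutive pair contains no point of `P` other than the pair
itself (coordinates are distinct), so the point of `H` it contains is an endpoint.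
-/

namespace Set

variable {β : Type*} [LinearOrder β]

theorem eq_or_eq_of_mem_uIcc_of_notMem_uIoo {a b x : β} (hIcc : x ∈ uIcc a b)
    (hIoo : x ∉ uIoo a b) : x = a ∨ x = b := by
  have hx : x ∈ ({a ⊓ b, a ⊔ b} : Set β) := by
    rw [← Icc_sdiff_Ioo_same inf_le_sup]
    exact ⟨hIcc, hIoo⟩
  rcases hx with h | h
  · exact (min_choice a b).imp h.trans h.trans
  · exact (max_choice a b).imp h.trans h.trans

end Set

open Set

section Consecutive

variable {α β : Type*} [LinearOrder β]

/-- `XConsecutive P` and `YConsecutive P` are definitionally `Consecutive P Prod.fst` and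
`Consecutive P Prod.snd`. -/
def Consecutive (P : Finset α) (f : α → β) (p q : α) : Prop :=
  ∀ r ∈ P, f r ∉ uIoo (f p) (f q)

theorem exists_consecutive_of_lt {P : Finset α} {f : α → β} {p q : α} (hq : q ∈ P)
    (hpq : f p < f q) : ∃ b ∈ P, f p < f b ∧ f b ≤ f q ∧ Consecutive P f p b := by
  classical
  have hqS : q ∈ P.filter (fun r => f p < f r ∧ f r ≤ f q) := by simp [hq, hpq]
  obtain ⟨b, hbS, hbmin⟩ := Finset.exists_min_image _ f ⟨q, hqS⟩
  obtain ⟨hbP, hpb, hbq⟩ := Finset.mem_filter.mp hbS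
  refine ⟨b, hbP, hpb, hbq, fun r hr hrpb => ?_⟩
  rw [uIoo_of_lt hpb] at hrpb
  exact (hbmin r (Finset.mem_filter.mpr ⟨hr, hrpb.1, hrpb.2.le.trans hbq⟩)).not_gt hrpb.2

theorem exists_mem_uIcc_of_consecutive_cover {P H : Finset α} {f : α → β}
    (hcover : ∀ a ∈ P, ∀ b ∈ P, a ≠ b → Consecutive P f a b → a ∈ H ∨ b ∈ H)
    {p q : α} (hp : p ∈ P) (hq : q ∈ P) (hpq : f p ≠ f q) :
    ∃ r ∈ H, f r ∈ uIcc (f p) (f q) := by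
  wlog hlt : f p < f q generalizing p q
  · rw [uIcc_comm]
    exact this hq hp hpq.symm (hpq.lt_or_gt.resolve_left hlt)
  obtain ⟨b, hb, hpb, hbq, hcons⟩ := exists_consecutive_of_lt hq hlt
  rw [uIcc_of_lt hlt]
  rcases hcover p hp b hb (fun h => hpb.ne (congrArg f h)) hcons with hpH | hbH
  · exact ⟨p, hpH, le_rfl, hlt.le⟩
  · exact ⟨b, hbH, hpb.le, hbq⟩

theorem Consecutive.mem_or_mem {P H : Finset α} {f : α → β} (hH : H ⊆ P)
    (hf : InjOn f P) {p q : α} (hp : p ∈ P) (hq : q ∈ P) (hcons : Consecutive P f p q)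
    (hhit : ∃ r ∈ H, f r ∈ uIcc (f p) (f q)) : p ∈ H ∨ q ∈ H := by
  obtain ⟨r, hrH, hr⟩ := hhit
  have hrP : r ∈ P := hH hrH
  rcases eq_or_eq_of_mem_uIcc_of_notMem_uIoo hr (hcons r hrP) with h | h
  · exact .inl (hf hrP hp h ▸ hrH)
  · exact .inr (hf hrP hq h ▸ hrH)

end Consecutive

theorem injOn_of_ne {α β : Type*} {P : Finset α} {f : α → β}
    (h : ∀ p ∈ P, ∀ q ∈ P, p ≠ q → f p ≠ f q) : InjOn f P :=
  fun p hp q hq hpq => by_contra fun hne => h p hp q hq hne hpq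

/-- A subset `H ⊆ P` hits all axis-parallel slabs induced by pairs of distinct points of `P`
iff it is a vertex cover of the graph `G_P`. -/
theorem hitting_set_iff_vertex_cover (P : Finset (ℝ × ℝ))
    (hx : ∀ p ∈ P, ∀ q ∈ P, p ≠ q → p.1 ≠ q.1)
    (hy : ∀ p ∈ P, ∀ q ∈ P, p ≠ q → p.2 ≠ q.2)
    (H : Finset (ℝ × ℝ)) (hH : H ⊆ P) :
    (∀ p ∈ P, ∀ q ∈ P, p ≠ q →
        (∃ r ∈ H, InVSlab p q r) ∧ (∃ r ∈ H, InHSlab p q r)) ↔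
      (∀ ⦃p q : ℝ × ℝ⦄, (slabGraph P).Adj p q → p ∈ H ∨ q ∈ H) := by
  constructor
  · rintro hhit p q ⟨hpq, hp, hq, hxcons | hycons⟩
    · exact Consecutive.mem_or_mem (f := Prod.fst) hH (injOn_of_ne hx) hp hq hxcons
        (hhit p hp q hq hpq).1
    · exact Consecutive.mem_or_mem (f := Prod.snd) hH (injOn_of_ne hy) hp hq hycons
        (hhit p hp q hq hpq).2
  · intro hcover p hp q hq hpq
    exact ⟨exists_mem_uIcc_of_consecutive_cover (f := Prod.fst)
        (fun a ha b hb hab hc => hcover ⟨hab, ha, hb, .inl hc⟩) hp hq (hx p hp q hq hpq),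
      exists_mem_uIcc_of_consecutive_cover (f := Prod.snd)
        (fun a ha b hb hab hc => hcover ⟨hab, ha, hb, .inr hc⟩) hp hq (hy p hp q hq hpq)⟩
end

section
/- Let n ≥ 1 and let σ, τ be permutations of {1,…,n}. Define the point p_i := (σ⁻¹(i), τ⁻¹(i)) ∈ ℝ² for each i ∈ {1,…,n}, and let P := {p_1,…,p_n}. Then for every subset S ⊆ {1,…,n}: S is a vertex cover of the braid graph of σ and τ if and only if {p_i : i ∈ S} is a hitting set for all axis-parallel slabs induced by pairs of distinct points of P. In particular, for every k, the braid graph of σ and τ has a vertex cover of size at most k if and only if P admits a hitting set of size at most k for its induced axis-parallel slabs. -/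
/-- `H` is a hitting set for all the axis-parallel slabs induced by pairs of distinct
points of `P`: `H ⊆ P` and for every pair of distinct points of `P`, both induced slabs
contain a point of `H`. -/
def IsHittingSet (P H : Finset (ℝ × ℝ)) : Prop :=
  H ⊆ P ∧ ∀ p ∈ P, ∀ q ∈ P, p ≠ q →
    (∃ r ∈ H, InVSlab p q r) ∧ (∃ r ∈ H, InHSlab p q r)

/-- `S` is a vertex cover of `G`: every edge of `G` has an endpoint in `S`. -/
def IsVertexCover {V : Type*} (G : SimpleGraph V) (S : Finset V) : Prop :=
  ∀ ⦃u v : V⦄, G.Adj u v → u ∈ S ∨ v ∈ S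

/-- The braid graph of two permutations `σ, τ` of `Fin n`: its edge set is the union of
the two Hamiltonian paths `σ(0)σ(1)…σ(n-1)` and `τ(0)τ(1)…τ(n-1)`. -/
def braidGraph (n : ℕ) (σ τ : Equiv.Perm (Fin n)) : SimpleGraph (Fin n) where
  Adj i j := i ≠ j ∧ ∃ a b : Fin n, (b : ℕ) = (a : ℕ) + 1 ∧
      ((σ a = i ∧ σ b = j) ∨ (σ a = j ∧ σ b = i) ∨
        (τ a = i ∧ τ b = j) ∨ (τ a = j ∧ τ b = i))
  symm := by
    constructor
    rintro i j ⟨hne, a, b, hab, h⟩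
    exact ⟨hne.symm, a, b, hab, by tauto⟩
  loopless := by
    constructor
    rintro i ⟨hne, -⟩
    exact hne rfl

/-- The point `p_i := (σ⁻¹(i), τ⁻¹(i)) ∈ ℝ²` associated to the vertex `i` of the
braid graph of `σ` and `τ`. -/
noncomputable def braidPoint (n : ℕ) (σ τ : Equiv.Perm (Fin n)) (i : Fin n) : ℝ × ℝ :=
  (((σ.symm i : Fin n) : ℕ), ((τ.symm i : Fin n) : ℕ))

/-!
A set of vertices meets every edge `π a, π (a + 1)` of the Hamiltonian path of a permutation `π`
iff it meets every segment `π [a, b]`, `a ≠ b`, of that path: each segment contains an edge and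
each edge is a segment. In the coordinate `π⁻¹`, the segments of the `σ`-path are the vertical
slabs of the points `p_i` and those of the `τ`-path the horizontal ones. As `i ↦ p_i` is
injective, a hitting set inside `P` is the image of a vertex set of the same size.
-/

open Set

theorem forall_covBy_mem_or_mem_iff {α : Type*} [LinearOrder α] [IsStronglyAtomic α]
    (T : Set α) :
    (∀ a b, a ⋖ b → a ∈ T ∨ b ∈ T) ↔ ∀ a b, a ≠ b → ∃ c ∈ T, c ∈ uIcc a b := by
  constructor
  · intro hT a b hab
    wlog hlt : a < b generalizing a b
    · obtain ⟨c, hc, hcab⟩ := this b a hab.symm (lt_of_le_of_ne (not_lt.1 hlt) hab.symm)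
      exact ⟨c, hc, uIcc_comm b a ▸ hcab⟩
    obtain ⟨x, hax, hxb⟩ := exists_covBy_le_of_lt hlt
    rcases hT a x hax with ha | hx
    · exact ⟨a, ha, left_mem_uIcc⟩
    · exact ⟨x, hx, Icc_subset_uIcc ⟨hax.le, hxb⟩⟩
  · intro hT a b hab
    obtain ⟨c, hc, hcab⟩ := hT a b hab.ne
    rw [uIcc_of_le hab.le, hab.Icc_eq] at hcab
    rcases hcab with rfl | rfl
    exacts [Or.inl hc, Or.inr hc]

theorem Equiv.forall_covBy_mem_or_mem_iff {α β : Type*} [LinearOrder α] [IsStronglyAtomic α]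
    (e : α ≃ β) (S : Set β) :
    (∀ a b, a ⋖ b → e a ∈ S ∨ e b ∈ S) ↔
      ∀ i j, i ≠ j → ∃ m ∈ S, e.symm m ∈ uIcc (e.symm i) (e.symm j) := by
  refine (_root_.forall_covBy_mem_or_mem_iff (e ⁻¹' S)).trans ?_
  constructor
  · intro h i j hij
    obtain ⟨c, hc, hcij⟩ := h _ _ (e.symm.injective.ne hij)
    exact ⟨e c, hc, by simpa using hcij⟩
  · intro h a b hab
    obtain ⟨m, hm, hmab⟩ := h _ _ (e.injective.ne hab)
    exact ⟨e.symm m, by simpa using hm, by simpa using hmab⟩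

theorem Fin.covBy_iff_val_eq_add_one {n : ℕ} {a b : Fin n} : a ⋖ b ↔ (b : ℕ) = a + 1 := by
  constructor
  · intro h
    by_contra hne
    have hlt := Fin.lt_def.1 h.1
    exact h.2 (c := ⟨a + 1, by omega⟩) (Fin.lt_def.2 (Nat.lt_succ_self _))
      (Fin.lt_def.2 (show (a : ℕ) + 1 < b by omega))
  · intro h
    refine ⟨Fin.lt_def.2 (by omega), fun c hac hcb => ?_⟩
    rw [Fin.lt_def] at hac hcb
    omega

theorem Fin.natCast_val_mem_uIcc_iff {R : Type*} [Semiring R] [LinearOrder R]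
    [IsStrictOrderedRing R] {n : ℕ} {a b c : Fin n} :
    ((c : ℕ) : R) ∈ uIcc ((a : ℕ) : R) ((b : ℕ) : R) ↔ c ∈ uIcc a b :=
  Set.ext_iff.1 (OrderEmbedding.preimage_uIcc
    ((Fin.valOrderEmb n).trans Nat.castOrderEmbedding) a b) c

theorem isHittingSet_image_iff {ι : Type*} [Fintype ι] {f : ι → ℝ × ℝ}
    (hf : Function.Injective f) (S : Finset ι) :
    IsHittingSet (Finset.univ.image f) (S.image f) ↔
      ∀ i j, i ≠ j →
        (∃ m ∈ S, InVSlab (f i) (f j) (f m)) ∧ (∃ m ∈ S, InHSlab (f i) (f j) (f m)) := by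
  simp [IsHittingSet, hf.ne_iff, Finset.image_subset_image (Finset.subset_univ S)]

section Braid

variable {n : ℕ} (σ τ : Equiv.Perm (Fin n))

theorem braidGraph_adj_left {a b : Fin n} (h : a ⋖ b) : (braidGraph n σ τ).Adj (σ a) (σ b) :=
  ⟨σ.injective.ne h.ne, a, b, Fin.covBy_iff_val_eq_add_one.1 h, Or.inl ⟨rfl, rfl⟩⟩

theorem braidGraph_adj_right {a b : Fin n} (h : a ⋖ b) : (braidGraph n σ τ).Adj (τ a) (τ b) :=
  ⟨τ.injective.ne h.ne, a, b, Fin.covBy_iff_val_eq_add_one.1 h,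
    Or.inr (Or.inr (Or.inl ⟨rfl, rfl⟩))⟩

theorem isVertexCover_braidGraph_iff (S : Finset (Fin n)) :
    IsVertexCover (braidGraph n σ τ) S ↔
      (∀ a b, a ⋖ b → σ a ∈ S ∨ σ b ∈ S) ∧ (∀ a b, a ⋖ b → τ a ∈ S ∨ τ b ∈ S) := by
  refine ⟨fun hS => ⟨fun a b h => hS (braidGraph_adj_left σ τ h),
    fun a b h => hS (braidGraph_adj_right σ τ h)⟩, ?_⟩
  rintro ⟨hσ, hτ⟩ u v ⟨-, a, b, hab, hpath⟩
  have h := Fin.covBy_iff_val_eq_add_one.2 hab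
  rcases hpath with ⟨rfl, rfl⟩ | ⟨rfl, rfl⟩ | ⟨rfl, rfl⟩ | ⟨rfl, rfl⟩
  exacts [hσ a b h, (hσ a b h).symm, hτ a b h, (hτ a b h).symm]

theorem braidPoint_injective : Function.Injective (braidPoint n σ τ) := fun _ _ h =>
  σ.symm.injective <| Fin.ext <| Nat.cast_injective (R := ℝ) congr(($h).1)

theorem inVSlab_braidPoint (i j m : Fin n) :
    InVSlab (braidPoint n σ τ i) (braidPoint n σ τ j) (braidPoint n σ τ m) ↔
      σ.symm m ∈ uIcc (σ.symm i) (σ.symm j) :=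
  Fin.natCast_val_mem_uIcc_iff

theorem inHSlab_braidPoint (i j m : Fin n) :
    InHSlab (braidPoint n σ τ i) (braidPoint n σ τ j) (braidPoint n σ τ m) ↔
      τ.symm m ∈ uIcc (τ.symm i) (τ.symm j) :=
  Fin.natCast_val_mem_uIcc_iff

theorem isVertexCover_braidGraph_iff_isHittingSet (S : Finset (Fin n)) :
    IsVertexCover (braidGraph n σ τ) S ↔
      IsHittingSet (Finset.univ.image (braidPoint n σ τ)) (S.image (braidPoint n σ τ)) := by
  have hσ := σ.forall_covBy_mem_or_mem_iff S
  have hτ := τ.forall_covBy_mem_or_mem_iff S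
  simp only [Finset.mem_coe] at hσ hτ
  rw [isVertexCover_braidGraph_iff, isHittingSet_image_iff (braidPoint_injective σ τ), hσ, hτ]
  simp only [inVSlab_braidPoint, inHSlab_braidPoint, ← forall_and]

end Braid

theorem braid_vertexCover_iff_slab_hittingSet_general (n : ℕ)
    (σ τ : Equiv.Perm (Fin n)) :
    (∀ S : Finset (Fin n),
        IsVertexCover (braidGraph n σ τ) S ↔
          IsHittingSet (Finset.univ.image (braidPoint n σ τ))
            (S.image (braidPoint n σ τ)))
    ∧ ∀ k : ℕ,
        (∃ S : Finset (Fin n), IsVertexCover (braidGraph n σ τ) S ∧ S.card ≤ k) ↔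
        (∃ H : Finset (ℝ × ℝ),
          IsHittingSet (Finset.univ.image (braidPoint n σ τ)) H ∧ H.card ≤ k) := by
  refine ⟨isVertexCover_braidGraph_iff_isHittingSet σ τ, fun k => ⟨?_, ?_⟩⟩
  · rintro ⟨S, hS, hk⟩
    exact ⟨_, (isVertexCover_braidGraph_iff_isHittingSet σ τ S).1 hS,
      Finset.card_image_le.trans hk⟩
  · rintro ⟨H, hH, hk⟩
    obtain ⟨S, -, rfl⟩ := Finset.subset_image_iff.1 hH.1
    refine ⟨S, (isVertexCover_braidGraph_iff_isHittingSet σ τ S).2 hH, ?_⟩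
    rwa [Finset.card_image_of_injective S (braidPoint_injective σ τ)] at hk

/-- Vertex Cover on the braid graph of `σ` and `τ` reduces to hitting all axis-parallel
slabs induced by the point set `P = {p_i : i}` with `p_i = (σ⁻¹(i), τ⁻¹(i))`: a set
`S` of vertices is a vertex cover iff `{p_i : i ∈ S}` is a hitting set for the induced
slabs of `P`; in particular, there is a vertex cover of size at most `k` iff there is a
hitting set of size at most `k`. -/
theorem braid_vertexCover_iff_slab_hittingSet (n : ℕ) (hn : 1 ≤ n)
    (σ τ : Equiv.Perm (Fin n)) :
    (∀ S : Finset (Fin n),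
        IsVertexCover (braidGraph n σ τ) S ↔
          IsHittingSet (Finset.univ.image (braidPoint n σ τ))
            (S.image (braidPoint n σ τ)))
    ∧ ∀ k : ℕ,
        (∃ S : Finset (Fin n), IsVertexCover (braidGraph n σ τ) S ∧ S.card ≤ k) ↔
        (∃ H : Finset (ℝ × ℝ),
          IsHittingSet (Finset.univ.image (braidPoint n σ τ)) H ∧ H.card ≤ k) :=
  braid_vertexCover_iff_slab_hittingSet_general n σ τ
end

section
/- Let G be a finite simple graph and let M = {(x_1,x′_1),…,(x_m,x′_m)} be a perfect matching of G. Let Ĝ be the graph obtained from G as follows: for each i ∈ {1,…,m}, delete the edge (x_i, x′_i), add six new vertices s_i, a_i, b_i, a′_i, b′_i, t_i carrying the edges {a_ib_i, a_ia′_i, a_ib′_i, b_ib′_i, b_ia′_i, a′_ib′_i, s_ia_i, s_ib′_i, s_it_i, t_ib_i, t_ia′_i}, and add the edges (x_i, s_i) and (t_i, x′_i); the six-vertex sets for different i are disjoint. Then for every natural number p, G has a vertex cover of size at most p if and only if Ĝ has a vertex cover of size at most p + 4m. -/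
/-!
Every vertex cover of the gadget `J` has at least four vertices, and at least five if it
contains both `s` and `t`, while `{a, b, b', t}` and `{s, a, b, a'}` are covers of size four.
A cover `S` of `G` lifts to `Ĝ` by adding, in gadget `i`, the four-vertex cover that contains
`t_i` if `x_i ∈ S` and `s_i` otherwise (then `x'_i ∈ S`, as `S` covers `x_i x'_i`).
Conversely, a cover `T` of `Ĝ` contains `x_i` or `x'_i` unless it contains both `s_i` and `t_i`;
so `T ∩ V`, together with `x_i` for every gadget where `T` paid that fifth vertex, covers `G`.
-/

/-- The six labels of the gadget `J` replacing a matching edge. -/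
inductive JL : Type
  | s | a | b | a' | b' | t
  deriving DecidableEq

/-- The internal edge list of the gadget `J`: a clique on `{a, b, a', b'}` together with
the edges `sa, sb', st, tb, ta'`. -/
def gadEdges : List (JL × JL) :=
  [(JL.a, JL.b), (JL.a, JL.a'), (JL.a, JL.b'), (JL.b, JL.b'), (JL.b, JL.a'),
    (JL.a', JL.b'), (JL.s, JL.a), (JL.s, JL.b'), (JL.s, JL.t), (JL.t, JL.b),
    (JL.t, JL.a')]

/-- Internal adjacency of the gadget `J`. -/
def GadAdj (l l' : JL) : Prop := (l, l') ∈ gadEdges ∨ (l', l) ∈ gadEdges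

/-- The graph `Ĝ` obtained from `G` and a family `e : Fin m → V × V` of matching edges:
each edge `(x_i, x'_i) = e i` is deleted and replaced by a fresh copy of the gadget `J`
on the six vertices `(i, s), (i, a), (i, b), (i, a'), (i, b'), (i, t)`, with the
attachment edges `(x_i, s_i)` and `(t_i, x'_i)`. -/
def hatGraph {V : Type*} (G : SimpleGraph V) {m : ℕ} (e : Fin m → V × V) :
    SimpleGraph (V ⊕ (Fin m × JL)) where
  Adj u v :=
    match u, v with
    | Sum.inl a, Sum.inl b =>
        G.Adj a b ∧ ∀ i, ¬((a = (e i).1 ∧ b = (e i).2) ∨ (a = (e i).2 ∧ b = (e i).1))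
    | Sum.inl a, Sum.inr (i, l) => (a = (e i).1 ∧ l = JL.s) ∨ (a = (e i).2 ∧ l = JL.t)
    | Sum.inr (i, l), Sum.inl a => (a = (e i).1 ∧ l = JL.s) ∨ (a = (e i).2 ∧ l = JL.t)
    | Sum.inr (i, l), Sum.inr (j, l') => i = j ∧ GadAdj l l'
  symm := by
    constructor
    rintro (a | ⟨i, l⟩) (b | ⟨j, l'⟩) h
    · exact ⟨h.1.symm, fun i hc => h.2 i (by tauto)⟩
    · exact h
    · exact h
    · obtain ⟨rfl, h2⟩ := h
      exact ⟨rfl, h2.symm⟩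
  loopless := by
    constructor
    rintro (a | ⟨i, l⟩) h
    · exact G.loopless.irrefl a h.1
    · cases l <;> exact absurd h.2 (by simp [GadAdj, gadEdges])

open Finset

instance : Fintype JL :=
  ⟨⟨[JL.s, JL.a, JL.b, JL.a', JL.b', JL.t], by decide⟩, fun l => by cases l <;> decide⟩

instance : DecidableRel GadAdj := fun l l' =>
  inferInstanceAs (Decidable ((l, l') ∈ gadEdges ∨ (l', l) ∈ gadEdges))

instance {V : Type*} [Fintype V] [DecidableEq V] (G : SimpleGraph V) [DecidableRel G.Adj]
    (S : Finset V) : Decidable (IsVertexCover G S) :=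
  inferInstanceAs (Decidable (∀ u v, G.Adj u v → u ∈ S ∨ v ∈ S))

lemma Finset.card_eq_sum_card_slice {ι β : Type*} [Fintype ι] [Fintype β] [DecidableEq ι]
    [DecidableEq β] (U : Finset (ι × β)) :
    #U = ∑ i, #{l | (i, l) ∈ U} := by
  simp only [card_filter]
  rw [← Fintype.sum_prod_type (fun x => if x ∈ U then 1 else 0), ← card_filter, filter_univ_mem]

namespace JL

def gadget : SimpleGraph JL where
  Adj := GadAdj
  symm := ⟨by decide⟩
  loopless := ⟨by decide⟩

instance : DecidableRel gadget.Adj := inferInstanceAs (DecidableRel GadAdj)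

def coverT : Finset JL := {a, b, b', t}

def coverS : Finset JL := {s, a, b, a'}

lemma isVertexCover_coverT : IsVertexCover gadget coverT := by decide

lemma isVertexCover_coverS : IsVertexCover gadget coverS := by decide

lemma four_le_card_of_isVertexCover (L : Finset JL) (hL : IsVertexCover gadget L) : 4 ≤ #L := by
  revert L; decide

lemma five_le_card_of_isVertexCover_of_s_mem_of_t_mem (L : Finset JL)
    (hL : IsVertexCover gadget L) (hs : s ∈ L) (ht : t ∈ L) : 5 ≤ #L := by
  revert L; decide

end JL

namespace hatGraph

open Sum

variable {V : Type*} [DecidableEq V] {G : SimpleGraph V} {m : ℕ} {e : Fin m → V × V}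

def gadgetSide (e : Fin m → V × V) (S : Finset V) (i : Fin m) : Finset JL :=
  if (e i).1 ∈ S then JL.coverT else JL.coverS

lemma isVertexCover_gadgetSide (S : Finset V) (i : Fin m) :
    IsVertexCover JL.gadget (gadgetSide e S i) := by
  unfold gadgetSide
  split_ifs
  exacts [JL.isVertexCover_coverT, JL.isVertexCover_coverS]

lemma card_gadgetSide (S : Finset V) (i : Fin m) : #(gadgetSide e S i) = 4 := by
  unfold gadgetSide
  split_ifs <;> rfl

def liftCover (e : Fin m → V × V) (S : Finset V) : Finset (V ⊕ (Fin m × JL)) :=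
  S.disjSum {x | x.2 ∈ gadgetSide e S x.1}

@[simp]
lemma inl_mem_liftCover {S : Finset V} {u : V} : inl u ∈ liftCover e S ↔ u ∈ S :=
  inl_mem_disjSum

@[simp]
lemma inr_mem_liftCover {S : Finset V} {i : Fin m} {l : JL} :
    inr (i, l) ∈ liftCover e S ↔ l ∈ gadgetSide e S i := by
  simp [liftCover]

lemma card_liftCover (S : Finset V) : #(liftCover e S) = #S + 4 * m := by
  rw [liftCover, card_disjSum, card_eq_sum_card_slice]
  simp [card_gadgetSide, mul_comm]

lemma isVertexCover_liftCover (hadj : ∀ i, G.Adj (e i).1 (e i).2) {S : Finset V}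
    (hS : IsVertexCover G S) : IsVertexCover (hatGraph G e) (liftCover e S) := by
  have attach (u : V) (i : Fin m) (l : JL) (h : (hatGraph G e).Adj (inl u) (inr (i, l))) :
      inl u ∈ liftCover e S ∨ inr (i, l) ∈ liftCover e S := by
    have hpartner := (hS (hadj i)).resolve_left
    rcases h with ⟨rfl, rfl⟩ | ⟨rfl, rfl⟩ <;> by_cases hx : (e i).1 ∈ S <;>
      simp +decide [gadgetSide, hx, hpartner]
  rintro (u | ⟨i, l⟩) (v | ⟨j, l'⟩) h
  · exact (hS h.1).imp inl_mem_liftCover.2 inl_mem_liftCover.2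
  · exact attach u j l' h
  · exact (attach v i l h.symm).symm
  · obtain ⟨rfl, h⟩ := h
    simpa using isVertexCover_gadgetSide S i h

def bothEnds (T : Finset (V ⊕ (Fin m × JL))) : Finset (Fin m) :=
  {i | inr (i, JL.s) ∈ T ∧ inr (i, JL.t) ∈ T}

def projCover (e : Fin m → V × V) (T : Finset (V ⊕ (Fin m × JL))) : Finset V :=
  T.toLeft ∪ (bothEnds T).image fun i => (e i).1

variable {T : Finset (V ⊕ (Fin m × JL))}

lemma isVertexCover_projCover (hT : IsVertexCover (hatGraph G e) T) :
    IsVertexCover G (projCover e T) := by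
  have matching (i : Fin m) : (e i).1 ∈ projCover e T ∨ (e i).2 ∈ projCover e T := by
    by_cases hi : i ∈ bothEnds T
    · exact Or.inl (mem_union_right _ (mem_image_of_mem _ hi))
    · have hs := hT (u := inl (e i).1) (v := inr (i, JL.s)) (Or.inl ⟨rfl, rfl⟩)
      have ht := hT (u := inl (e i).2) (v := inr (i, JL.t)) (Or.inr ⟨rfl, rfl⟩)
      simp only [bothEnds, mem_filter, mem_univ, true_and] at hi
      simp only [projCover, mem_union, mem_toLeft]
      tauto
  intro u v huv
  by_cases hm : ∃ i, (u = (e i).1 ∧ v = (e i).2) ∨ (u = (e i).2 ∧ v = (e i).1)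
  · obtain ⟨i, ⟨rfl, rfl⟩ | ⟨rfl, rfl⟩⟩ := hm
    exacts [matching i, (matching i).symm]
  · have h : (hatGraph G e).Adj (inl u) (inl v) := ⟨huv, fun i hi => hm ⟨i, hi⟩⟩
    simpa [projCover] using (hT h).imp Or.inl Or.inl

lemma four_mul_add_card_bothEnds_le (hT : IsVertexCover (hatGraph G e) T) :
    4 * m + #(bothEnds T) ≤ #T.toRight := by
  have slice (i : Fin m) : IsVertexCover JL.gadget {l | (i, l) ∈ T.toRight} := fun l l' h => by
    simpa using hT (u := inr (i, l)) (v := inr (i, l')) ⟨rfl, h⟩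
  calc 4 * m + #(bothEnds T) = ∑ i, (4 + if i ∈ bothEnds T then 1 else 0) := by
        simp [sum_add_distrib, mul_comm]
    _ ≤ ∑ i, #{l | (i, l) ∈ T.toRight} := by
        refine sum_le_sum fun i _ => ?_
        split_ifs with hi
        · simp only [bothEnds, mem_filter, mem_univ, true_and] at hi
          exact JL.five_le_card_of_isVertexCover_of_s_mem_of_t_mem _ (slice i)
            (by simpa using hi.1) (by simpa using hi.2)
        · exact JL.four_le_card_of_isVertexCover _ (slice i)
    _ = #T.toRight := (card_eq_sum_card_slice _).symm

lemma card_projCover_add_le (hT : IsVertexCover (hatGraph G e) T) :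
    #(projCover e T) + 4 * m ≤ #T := by
  have hproj : #(projCover e T) ≤ #T.toLeft + #(bothEnds T) :=
    (card_union_le _ _).trans (Nat.add_le_add_left card_image_le _)
  have := four_mul_add_card_bothEnds_le hT
  have := card_toLeft_add_card_toRight (u := T)
  omega

end hatGraph

theorem hatGraph_vertexCover_iff_general {V : Type*}
    (G : SimpleGraph V) (m : ℕ) (e : Fin m → V × V)
    (hadj : ∀ i, G.Adj (e i).1 (e i).2)
    (p : ℕ) :
    (∃ S : Finset V, IsVertexCover G S ∧ S.card ≤ p) ↔
      (∃ S : Finset (V ⊕ (Fin m × JL)),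
        IsVertexCover (hatGraph G e) S ∧ S.card ≤ p + 4 * m) := by
  classical
  constructor
  · rintro ⟨S, hS, hcard⟩
    exact ⟨hatGraph.liftCover e S, hatGraph.isVertexCover_liftCover hadj hS,
      (hatGraph.card_liftCover S).trans_le (by omega)⟩
  · rintro ⟨T, hT, hcard⟩
    have := hatGraph.card_projCover_add_le hT
    exact ⟨hatGraph.projCover e T, hatGraph.isVertexCover_projCover hT, by omega⟩

/-- If `e` enumerates a perfect matching `M` of `G` (with `m` edges), then `G` has a
vertex cover of size at most `p` iff the graph `Ĝ`, obtained by replacing every matching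
edge with a copy of the gadget `J`, has a vertex cover of size at most `p + 4m`. -/
theorem hatGraph_vertexCover_iff {V : Type*} [Fintype V] [DecidableEq V]
    (G : SimpleGraph V) (m : ℕ) (e : Fin m → V × V)
    (hadj : ∀ i, G.Adj (e i).1 (e i).2)
    (hdisj : ∀ i j, i ≠ j →
      ({(e i).1, (e i).2} : Finset V) ∩ {(e j).1, (e j).2} = ∅)
    (hcover : ∀ v : V, ∃ i, v = (e i).1 ∨ v = (e i).2)
    (p : ℕ) :
    (∃ S : Finset V, IsVertexCover G S ∧ S.card ≤ p) ↔
      (∃ S : Finset (V ⊕ (Fin m × JL)),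
        IsVertexCover (hatGraph G e) S ∧ S.card ≤ p + 4 * m) :=
  hatGraph_vertexCover_iff_general G m e hadj p
end

section
/- Let G be a finite simple graph and B a subset of its vertex set, and let t be a natural number. Suppose that (i) every vertex cover of the subgraph of G induced by B has at least t vertices, and (ii) there exists a set X ⊆ B with |X| = t such that every edge of G with at least one endpoint in B has an endpoint in X. Then for every natural number k, G has a vertex cover of size at most k + t if and only if the graph G − B obtained by deleting all vertices of B has a vertex cover of size at most k. -/
/-! A cover of `G` splits into a cover of `G − B` and a cover of `G[B]`, and the latter costs at
least `t`; conversely, a cover of `G − B` together with `X` covers `G`, at an extra cost of `t`. -/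

open Finset

namespace IsVertexCover

variable {V : Type*} [DecidableEq V] {G : SimpleGraph V} {S : Finset V}

theorem sdiff (hS : IsVertexCover G S) (B : Finset V) :
    ∀ u v : V, G.Adj u v → u ∉ B → v ∉ B → u ∈ S \ B ∨ v ∈ S \ B := by
  intro u v huv hu hv
  rcases hS huv with h | h
  · exact Or.inl (mem_sdiff.2 ⟨h, hu⟩)
  · exact Or.inr (mem_sdiff.2 ⟨h, hv⟩)

theorem inter (hS : IsVertexCover G S) (B : Finset V) :
    ∀ u v : V, u ∈ B → v ∈ B → G.Adj u v → u ∈ S ∩ B ∨ v ∈ S ∩ B := by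
  intro u v hu hv huv
  rcases hS huv with h | h
  · exact Or.inl (mem_inter.2 ⟨h, hu⟩)
  · exact Or.inr (mem_inter.2 ⟨h, hv⟩)

end IsVertexCover

theorem isVertexCover_union_of_covers {V : Type*} [DecidableEq V] {G : SimpleGraph V}
    {B S X : Finset V}
    (hS : ∀ u v : V, G.Adj u v → u ∉ B → v ∉ B → u ∈ S ∨ v ∈ S)
    (hX : ∀ u v : V, G.Adj u v → (u ∈ B ∨ v ∈ B) → u ∈ X ∨ v ∈ X) :
    IsVertexCover G (S ∪ X) := by
  intro u v huv
  by_cases huvB : u ∈ B ∨ v ∈ B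
  · exact (hX u v huv huvB).imp (mem_union_right S) (mem_union_right S)
  · rw [not_or] at huvB
    exact (hS u v huv huvB.1 huvB.2).imp (mem_union_left X) (mem_union_left X)

theorem vertexCover_delete_gadget_iff_general {V : Type*} [DecidableEq V]
    (G : SimpleGraph V) (B : Finset V) (t : ℕ)
    (hlb : ∀ S : Finset V, S ⊆ B →
      (∀ u v : V, u ∈ B → v ∈ B → G.Adj u v → u ∈ S ∨ v ∈ S) → t ≤ S.card)
    (hX : ∃ X : Finset V, X ⊆ B ∧ X.card = t ∧
      ∀ u v : V, G.Adj u v → (u ∈ B ∨ v ∈ B) → u ∈ X ∨ v ∈ X)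
    (k : ℕ) :
    (∃ S : Finset V, IsVertexCover G S ∧ S.card ≤ k + t) ↔
      (∃ S : Finset V, (∀ v ∈ S, v ∉ B) ∧
        (∀ u v : V, G.Adj u v → u ∉ B → v ∉ B → u ∈ S ∨ v ∈ S) ∧ S.card ≤ k) := by
  constructor
  · rintro ⟨S, hS, hcard⟩
    have ht : t ≤ (S ∩ B).card := hlb _ inter_subset_right (hS.inter B)
    have hsplit := card_sdiff_add_card_inter S B
    exact ⟨S \ B, fun v hv => (mem_sdiff.1 hv).2, hS.sdiff B, by omega⟩
  · rintro ⟨S, -, hS, hcard⟩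
    obtain ⟨X, -, rfl, hXcov⟩ := hX
    exact ⟨S ∪ X, isVertexCover_union_of_covers hS hXcov,
      (card_union_le S X).trans (by omega)⟩

/-- Suppose (i) every vertex cover of the subgraph of `G` induced by `B` has at least
`t` vertices, and (ii) there is a set `X ⊆ B` with `|X| = t` covering every edge of `G`
having an endpoint in `B`. Then `G` has a vertex cover of size at most `k + t` iff the
graph `G − B` (delete the vertices of `B`) has a vertex cover of size at most `k`. -/
theorem vertexCover_delete_gadget_iff {V : Type*} [Fintype V] [DecidableEq V]
    (G : SimpleGraph V) (B : Finset V) (t : ℕ)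
    (hlb : ∀ S : Finset V, S ⊆ B →
      (∀ u v : V, u ∈ B → v ∈ B → G.Adj u v → u ∈ S ∨ v ∈ S) → t ≤ S.card)
    (hX : ∃ X : Finset V, X ⊆ B ∧ X.card = t ∧
      ∀ u v : V, G.Adj u v → (u ∈ B ∨ v ∈ B) → u ∈ X ∨ v ∈ X)
    (k : ℕ) :
    (∃ S : Finset V, IsVertexCover G S ∧ S.card ≤ k + t) ↔
      (∃ S : Finset V, (∀ v ∈ S, v ∉ B) ∧
        (∀ u v : V, G.Adj u v → u ∉ B → v ∉ B → u ∈ S ∨ v ∈ S) ∧ S.card ≤ k) :=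
  vertexCover_delete_gadget_iff_general G B t hlb hX k
end

section
/- Let G be a finite simple graph and let v be a vertex of degree exactly 3 in G. Then there exists a minimum vertex cover of G that contains either all three neighbors of v, or at most one neighbor of v. -/
/-!
Take a minimum vertex cover `S`. If it contains at most one neighbour of `v`, or all three,
we are done. Otherwise it misses exactly one neighbour `w`; then `v ∈ S` (to cover `vw`), and
exchanging `v` for `w` gives a cover of no larger size containing all three neighbours.
-/

section

variable {V : Type*}

def IsMinVertexCover (G : SimpleGraph V) (S : Finset V) : Prop :=
  IsVertexCover G S ∧ ∀ S' : Finset V, IsVertexCover G S' → S.card ≤ S'.card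

theorem exists_isMinVertexCover [Fintype V] (G : SimpleGraph V) :
    ∃ S, IsMinVertexCover G S := by
  obtain ⟨S, hS, hmin⟩ := (measure Finset.card).wf.has_min {S | IsVertexCover G S}
    ⟨Finset.univ, fun u _ _ => .inl (Finset.mem_univ u : u ∈ Finset.univ)⟩
  exact ⟨S, hS, fun S' hS' => not_lt.1 (hmin S' hS')⟩

variable {G : SimpleGraph V}

theorem IsVertexCover.of_erase_subset [DecidableEq V] {S T : Finset V} {v : V}
    (hS : IsVertexCover G S) (hST : S.erase v ⊆ T) (hN : ∀ u, G.Adj v u → u ∈ T) :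
    IsVertexCover G T := by
  intro a b hab
  by_cases hav : a = v
  · subst hav; exact .inr (hN b hab)
  by_cases hbv : b = v
  · subst hbv; exact .inl (hN a hab.symm)
  exact (hS hab).imp (fun ha => hST (Finset.mem_erase.2 ⟨hav, ha⟩))
    (fun hb => hST (Finset.mem_erase.2 ⟨hbv, hb⟩))

theorem IsMinVertexCover.exists_neighborFinset_subset [DecidableEq V] {S : Finset V} {v : V}
    [Fintype (G.neighborSet v)] (hS : IsMinVertexCover G S)
    (hmiss : (G.neighborFinset v \ S).card ≤ 1) :
    ∃ T, IsMinVertexCover G T ∧ G.neighborFinset v ⊆ T := by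
  obtain hempty | hone := Nat.le_one_iff_eq_zero_or_eq_one.1 hmiss
  · exact ⟨S, hS, Finset.sdiff_eq_empty_iff_subset.1 (Finset.card_eq_zero.1 hempty)⟩
  obtain ⟨w, hw⟩ := Finset.card_eq_one.1 hone
  have hwN : w ∈ G.neighborFinset v \ S := hw ▸ Finset.mem_singleton_self w
  obtain ⟨hvw, hwS⟩ := Finset.mem_sdiff.1 hwN
  rw [SimpleGraph.mem_neighborFinset] at hvw
  have hvS : v ∈ S := (hS.1 hvw).resolve_right hwS
  have hN : G.neighborFinset v ⊆ insert w (S.erase v) := by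
    intro u hu
    rw [Finset.mem_insert, Finset.mem_erase]
    by_cases huS : u ∈ S
    · exact .inr ⟨(G.ne_of_adj ((G.mem_neighborFinset v u).1 hu)).symm, huS⟩
    · exact .inl (Finset.mem_singleton.1 (hw ▸ Finset.mem_sdiff.2 ⟨hu, huS⟩))
  have hcover : IsVertexCover G (insert w (S.erase v)) :=
    hS.1.of_erase_subset (Finset.subset_insert _ _) fun u hu => hN ((G.mem_neighborFinset v u).2 hu)
  have hcard : (insert w (S.erase v)).card ≤ S.card := by
    calc (insert w (S.erase v)).card ≤ (S.erase v).card + 1 := Finset.card_insert_le _ _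
      _ = S.card := Finset.card_erase_add_one hvS
  exact ⟨_, ⟨hcover, fun S' hS' => hcard.trans (hS.2 S' hS')⟩, hN⟩

end

/-- If `v` is a vertex of degree exactly `3` in `G`, then there is a minimum vertex
cover of `G` that contains either all three neighbors of `v` or at most one neighbor
of `v`. -/
theorem minimum_vertexCover_degree_three_neighbors {V : Type*} [Fintype V]
    [DecidableEq V] (G : SimpleGraph V) [DecidableRel G.Adj] (v : V)
    (hdeg : G.degree v = 3) :
    ∃ S : Finset V, IsVertexCover G S ∧
      (∀ S' : Finset V, IsVertexCover G S' → S.card ≤ S'.card) ∧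
      (G.neighborFinset v ⊆ S ∨ (S ∩ G.neighborFinset v).card ≤ 1) := by
  obtain ⟨S, hS⟩ := exists_isMinVertexCover G
  by_cases hfew : (S ∩ G.neighborFinset v).card ≤ 1
  · exact ⟨S, hS.1, hS.2, .inr hfew⟩
  have hmiss : (G.neighborFinset v \ S).card ≤ 1 := by
    have := Finset.card_sdiff_add_card_inter (G.neighborFinset v) S
    rw [Finset.inter_comm, SimpleGraph.card_neighborFinset_eq_degree, hdeg] at this
    omega
  obtain ⟨T, hT, hNT⟩ := hS.exists_neighborFinset_subset hmiss
  exact ⟨T, hT.1, hT.2, .inl hNT⟩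
end

section
/- Let G be a finite simple graph and let p and q be two distinct non-adjacent vertices of G such that p has at most one neighbor that is not a neighbor of q, and q has at most one neighbor that is not a neighbor of p. Then there exists a minimum vertex cover of G that contains both p and q, or contains neither p nor q. -/
namespace IsVertexCover

variable {V : Type*} {G : SimpleGraph V} {S T : Finset V}

theorem univ [Fintype V] : IsVertexCover G Finset.univ :=
  fun u _ _ => Or.inl (Finset.mem_univ u)

theorem mono (hS : IsVertexCover G S) (hST : S ⊆ T) : IsVertexCover G T :=
  fun _ _ huv => (hS huv).imp (@hST _) (@hST _)

theorem mem_of_adj_of_notMem {v x : V} (hS : IsVertexCover G S) (hv : v ∉ S)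
    (hvx : G.Adj v x) : x ∈ S :=
  (hS hvx).resolve_left hv

theorem erase [DecidableEq V] {p : V} (hS : IsVertexCover G S)
    (hp : ∀ x, G.Adj p x → x ∈ S) : IsVertexCover G (S.erase p) := by
  intro u v huv
  by_cases hu : u = p
  · subst hu
    exact Or.inr (Finset.mem_erase.2 ⟨huv.ne.symm, hp v huv⟩)
  by_cases hv : v = p
  · subst hv
    exact Or.inl (Finset.mem_erase.2 ⟨huv.ne, hp u huv.symm⟩)
  exact (hS huv).imp (Finset.mem_erase_of_ne_of_mem hu) (Finset.mem_erase_of_ne_of_mem hv)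

end IsVertexCover

def IsMinimumVertexCover {V : Type*} (G : SimpleGraph V) (S : Finset V) : Prop :=
  IsVertexCover G S ∧ ∀ S' : Finset V, IsVertexCover G S' → S.card ≤ S'.card

theorem exists_isMinimumVertexCover {V : Type*} [Fintype V] (G : SimpleGraph V) :
    ∃ S, IsMinimumVertexCover G S := by
  obtain ⟨S, hS, hmin⟩ := (measure Finset.card).wf.has_min {S | IsVertexCover G S}
    ⟨Finset.univ, IsVertexCover.univ⟩
  exact ⟨S, hS, fun S' hS' => not_lt.1 (hmin S' hS')⟩

namespace IsMinimumVertexCover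

variable {V : Type*} {G : SimpleGraph V} {S T : Finset V}

theorem of_card_le (hS : IsMinimumVertexCover G S) (hT : IsVertexCover G T)
    (hTS : T.card ≤ S.card) : IsMinimumVertexCover G T :=
  ⟨hT, fun S' hS' => hTS.trans (hS.2 S' hS')⟩

theorem exists_notMem_notMem [DecidableEq V] {p q : V} (hS : IsMinimumVertexCover G S)
    (hpS : p ∈ S) (hqS : q ∉ S) (hnadj : ¬ G.Adj p q)
    (hp : {x : V | G.Adj p x ∧ ¬ G.Adj q x}.Subsingleton) :
    ∃ T, IsMinimumVertexCover G T ∧ p ∉ T ∧ q ∉ T := by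
  set N := hp.finite.toFinset
  have hN : N.card ≤ 1 := Finset.card_le_one.2 fun a ha b hb =>
    hp (hp.finite.mem_toFinset.1 ha) (hp.finite.mem_toFinset.1 hb)
  have hcover : IsVertexCover G ((S ∪ N).erase p) := by
    refine (hS.1.mono Finset.subset_union_left).erase fun x hpx => ?_
    by_cases hqx : G.Adj q x
    · exact Finset.mem_union_left N (hS.1.mem_of_adj_of_notMem hqS hqx)
    · exact Finset.mem_union_right S (hp.finite.mem_toFinset.2 ⟨hpx, hqx⟩)
  have hcard : ((S ∪ N).erase p).card ≤ S.card := by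
    have hunion := Finset.card_union_le S N
    have hp_mem : p ∈ S ∪ N := Finset.mem_union_left N hpS
    rw [Finset.card_erase_of_mem hp_mem]
    omega
  refine ⟨_, hS.of_card_le hcover hcard, Finset.notMem_erase p _, fun hq => ?_⟩
  rcases Finset.mem_union.1 (Finset.mem_of_mem_erase hq) with hq | hq
  · exact hqS hq
  · exact hnadj (hp.finite.mem_toFinset.1 hq).1

end IsMinimumVertexCover

theorem minimum_vertexCover_both_or_neither_general {V : Type*} [Fintype V] [DecidableEq V]
    (G : SimpleGraph V) (p q : V) (hnadj : ¬ G.Adj p q)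
    (hp : {x : V | G.Adj p x ∧ ¬ G.Adj q x}.Subsingleton)
    (hq : {x : V | G.Adj q x ∧ ¬ G.Adj p x}.Subsingleton) :
    ∃ S : Finset V, IsVertexCover G S ∧
      (∀ S' : Finset V, IsVertexCover G S' → S.card ≤ S'.card) ∧
      ((p ∈ S ∧ q ∈ S) ∨ (p ∉ S ∧ q ∉ S)) := by
  obtain ⟨S, hS⟩ := exists_isMinimumVertexCover G
  by_cases hpS : p ∈ S <;> by_cases hqS : q ∈ S
  · exact ⟨S, hS.1, hS.2, Or.inl ⟨hpS, hqS⟩⟩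
  · obtain ⟨T, hT, hpT, hqT⟩ := hS.exists_notMem_notMem hpS hqS hnadj hp
    exact ⟨T, hT.1, hT.2, Or.inr ⟨hpT, hqT⟩⟩
  · obtain ⟨T, hT, hqT, hpT⟩ := hS.exists_notMem_notMem hqS hpS (fun h => hnadj h.symm) hq
    exact ⟨T, hT.1, hT.2, Or.inr ⟨hpT, hqT⟩⟩
  · exact ⟨S, hS.1, hS.2, Or.inr ⟨hpS, hqS⟩⟩

/-- Let `p` and `q` be distinct non-adjacent vertices of `G` such that `p` has at most
one neighbor that is not a neighbor of `q`, and `q` has at most one neighbor that is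
not a neighbor of `p`. Then there is a minimum vertex cover of `G` containing both `p`
and `q`, or containing neither. -/
theorem minimum_vertexCover_both_or_neither {V : Type*} [Fintype V] [DecidableEq V]
    (G : SimpleGraph V) (p q : V) (hpq : p ≠ q) (hnadj : ¬ G.Adj p q)
    (hp : {x : V | G.Adj p x ∧ ¬ G.Adj q x}.Subsingleton)
    (hq : {x : V | G.Adj q x ∧ ¬ G.Adj p x}.Subsingleton) :
    ∃ S : Finset V, IsVertexCover G S ∧
      (∀ S' : Finset V, IsVertexCover G S' → S.card ≤ S'.card) ∧
      ((p ∈ S ∧ q ∈ S) ∨ (p ∉ S ∧ q ∉ S)) :=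
  minimum_vertexCover_both_or_neither_general G p q hnadj hp hq
end
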